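/- arXiv:2105.01769 — 3 statements merged into one kernel-verified Lean document; each statement's English description precedes it below -/
import Mathlib

section
/- Suppose the connectedness condition holds: for every pair (i,j) with 1 ≤ i ≤ N and 1 ≤ j ≤ J there exist indices 1 ≤ i_1,…,i_k ≤ N and 1 ≤ j_1,…,j_k ≤ J such that z_{i,j_1} = z_{i_1,j_1} = z_{i_1,j_2} = z_{i_2,j_2} = … = z_{i_k,j_k} = z_{i_k,j} = 1. Then the vectors θ ∈ ℝ^N and β ∈ ℝ^J are uniquely determined by the equations Σ_{i=1}^N θ_i = 0 and θ_i − β_j = m_{ij} for all pairs (i,j) with z_{ij} = 1. -/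
open Filter Finset MeasureTheory

noncomputable section

/-- The logistic function `t ↦ eᵗ/(1+eᵗ)`. -/
def logisticFn (t : ℝ) : ℝ := Real.exp t / (1 + Real.exp t)

/-- The Bernoulli variance `σ²(t) = eᵗ/(1+eᵗ)²` as a function of the logit `t`. -/
def varFn (t : ℝ) : ℝ := Real.exp t / (1 + Real.exp t) ^ 2

/-- Number of observed entries in row `i`, i.e. `Σ_{j<J} z_{ij}`. -/
def rowCount (J : ℕ) (z : ℕ → ℕ → Bool) (i : ℕ) : ℕ :=
  ((Finset.range J).filter fun j => z i j = true).card

/-- Number of observed entries in column `j`, i.e. `Σ_{i<N} z_{ij}`. -/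
def colCount (N : ℕ) (z : ℕ → ℕ → Bool) (j : ℕ) : ℕ :=
  ((Finset.range N).filter fun i => z i j = true).card

/-- `J_*`: the minimal number of observed entries per row. -/
def Jlow (N J : ℕ) (z : ℕ → ℕ → Bool) : ℕ := sInf (rowCount J z '' Set.Iio N)

/-- `J^*`: the maximal number of observed entries per row. -/
def Jhigh (N J : ℕ) (z : ℕ → ℕ → Bool) : ℕ := (Finset.range N).sup (rowCount J z)

/-- `N_*`: the minimal number of observed entries per column. -/
def Nlow (N J : ℕ) (z : ℕ → ℕ → Bool) : ℕ := sInf (colCount N z '' Set.Iio J)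

/-- `N^*`: the maximal number of observed entries per column. -/
def Nhigh (N J : ℕ) (z : ℕ → ℕ → Bool) : ℕ := (Finset.range J).sup (colCount N z)

/-- Total number of observed entries. -/
def obsCard (N J : ℕ) (z : ℕ → ℕ → Bool) : ℕ := ∑ i ∈ Finset.range N, rowCount J z i

/-- The connectedness chain between row `i` and column `j`:
there are `i₁,…,i_k < N` and `j₁,…,j_k < J` with
`z_{i,j₁} = z_{i₁,j₁} = z_{i₁,j₂} = z_{i₂,j₂} = ⋯ = z_{i_k,j_k} = z_{i_k,j} = 1`. -/
def ConnectedPair (N J : ℕ) (z : ℕ → ℕ → Bool) (i j : ℕ) : Prop :=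
  ∃ k : ℕ, 1 ≤ k ∧ ∃ I Jc : ℕ → ℕ,
    (∀ l, 1 ≤ l → l ≤ k → I l < N ∧ Jc l < J) ∧
    z i (Jc 1) = true ∧
    (∀ l, 1 ≤ l → l ≤ k → z (I l) (Jc l) = true) ∧
    (∀ l, 1 ≤ l → l + 1 ≤ k → z (I l) (Jc (l + 1)) = true) ∧
    z (I k) j = true

/-- Condition 3 (connectedness of the observed pattern). -/
def Cond3 (N J : ℕ) (z : ℕ → ℕ → Bool) : Prop :=
  ∀ i < N, ∀ j < J, ConnectedPair N J z i j

/-- Condition 1, for a triangular array of missingness patterns indexed by `N`. -/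
def Cond1 (Jn : ℕ → ℕ) (z : ℕ → ℕ → ℕ → Bool) : Prop :=
  (∃ k : ℝ, 0 < k ∧ ∀ N : ℕ,
      k * (N : ℝ) ^ ((2 : ℝ) / 3) ≤ (Nlow N (Jn N) (z N) : ℝ) ∧
      k * (Jn N : ℝ) ^ ((2 : ℝ) / 3) ≤ (Jlow N (Jn N) (z N) : ℝ)) ∧
  Tendsto (fun N : ℕ => Real.log N / (Jlow N (Jn N) (z N) : ℝ)) atTop (nhds 0) ∧
  (∃ k₁ k₂ : ℝ, 0 < k₁ ∧ 0 < k₂ ∧ ∀ N : ℕ,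
      k₁ * (Jlow N (Jn N) (z N) : ℝ) ≤ (Jhigh N (Jn N) (z N) : ℝ) ∧
      (Jhigh N (Jn N) (z N) : ℝ) ≤ k₂ * (Jlow N (Jn N) (z N) : ℝ))

/-- Condition 2 (uniform boundedness of the true parameters). -/
def Cond2 (Jn : ℕ → ℕ) (θs βs : ℕ → ℕ → ℝ) : Prop :=
  ∃ c : ℝ, ∀ N : ℕ, (∀ i < N, |θs N i| < c) ∧ (∀ j < Jn N, |βs N j| < c)

/-- The Bernoulli 1-bit observation model: `Y N i j` are 0/1-valued, independent (for each `N`),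
with success probability given by the logistic function of `θ*_i − β*_j`. -/
def BernModel {Ω' : Type*} [MeasurableSpace Ω'] (μ : Measure Ω') (Jn : ℕ → ℕ)
    (θs βs : ℕ → ℕ → ℝ) (Y : ℕ → ℕ → ℕ → Ω' → ℝ) : Prop :=
  (∀ N i j, Measurable (Y N i j)) ∧
  (∀ N i j ω, Y N i j ω = 0 ∨ Y N i j ω = 1) ∧
  (∀ N : ℕ, ∀ i < N, ∀ j < Jn N,
      μ {ω | Y N i j ω = 1} = ENNReal.ofReal (logisticFn (θs N i - βs N j))) ∧
  (∀ N : ℕ, ProbabilityTheory.iIndepFun (m := fun _ : ℕ × ℕ => Real.measurableSpace)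
      (fun p : ℕ × ℕ => Y N p.1 p.2) μ)

/-- The log-likelihood `l(θ, β) = Σ_{z_{ij}=1} [Y_{ij}(θ_i − β_j) − log(1 + exp(θ_i − β_j))]`. -/
def loglik (N J : ℕ) (z : ℕ → ℕ → Bool) (Y : ℕ → ℕ → ℝ) (p : (ℕ → ℝ) × (ℕ → ℝ)) : ℝ :=
  ∑ i ∈ Finset.range N, ∑ j ∈ Finset.range J,
    if z i j = true then Y i j * (p.1 i - p.2 j) - Real.log (1 + Real.exp (p.1 i - p.2 j)) else 0

/-- `(θ, β)` is a maximum likelihood estimate: it maximizes the log-likelihood over the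
constraint set `Σ_{i<N} θ_i = 0`. -/
def IsMLE (N J : ℕ) (z : ℕ → ℕ → Bool) (Y : ℕ → ℕ → ℝ) (θ β : ℕ → ℝ) : Prop :=
  (∑ i ∈ Finset.range N, θ i) = 0 ∧
  IsMaxOn (loglik N J z Y) {p : (ℕ → ℝ) × (ℕ → ℝ) | (∑ i ∈ Finset.range N, p.1 i) = 0} (θ, β)

/-- `X_N = O_p(a_N)`: boundedness in probability at rate `a_N`. -/
def IsBigOp {Ω' : Type*} [MeasurableSpace Ω'] (μ : Measure Ω') (X : ℕ → Ω' → ℝ)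
    (a : ℕ → ℝ) : Prop :=
  ∀ ε : ℝ, 0 < ε → ∃ K : ℝ, 0 < K ∧
    ∀ᶠ N in atTop, μ {ω | K * a N < |X N ω|} < ENNReal.ofReal ε

/-- `max_{i<n} |g i|`. -/
def supAbs (n : ℕ) (g : ℕ → ℝ) : ℝ := sSup ((fun i => |g i|) '' Set.Iio n)

/-- `max_{i<n, j<m} |g i j|`. -/
def supAbs2 (n m : ℕ) (g : ℕ → ℕ → ℝ) : ℝ :=
  sSup ((fun p : ℕ × ℕ => |g p.1 p.2|) '' (Set.Iio n ×ˢ Set.Iio m))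

/-- The space `Ω_N` of vectors of observed entries of the form `x_{ij} = θ_i − β_j`
with `Σ_{i<N} θ_i = 0` (represented as functions, only the observed entries matter). -/
def OmegaSp (N J : ℕ) (z : ℕ → ℕ → Bool) : Set (ℕ → ℕ → ℝ) :=
  {x | ∃ θ β : ℕ → ℝ, (∑ i ∈ Finset.range N, θ i) = 0 ∧
    ∀ i < N, ∀ j < J, z i j = true → x i j = θ i - β j}

/-- The variance-weighted inner product `[x, y]_σ = Σ_{z_{ij}=1} x_{ij} σ_{ij}² y_{ij}`. -/
def ipSig (N J : ℕ) (z : ℕ → ℕ → Bool) (s : ℕ → ℕ → ℝ) (x y : ℕ → ℕ → ℝ) : ℝ :=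
  ∑ i ∈ Finset.range N, ∑ j ∈ Finset.range J, if z i j = true then x i j * s i j * y i j else 0

/-- The norm `‖x‖_σ`. -/
def normSig (N J : ℕ) (z : ℕ → ℕ → Bool) (s : ℕ → ℕ → ℝ) (x : ℕ → ℕ → ℝ) : ℝ :=
  Real.sqrt (ipSig N J z s x x)

/-- A linear functional on `Ω_N` with coefficients `w`: `g(x) = Σ_{z_{ij}=1} w_{ij} x_{ij}`. -/
def applyW (N J : ℕ) (z : ℕ → ℕ → Bool) (w x : ℕ → ℕ → ℝ) : ℝ :=
  ∑ i ∈ Finset.range N, ∑ j ∈ Finset.range J, if z i j = true then w i j * x i j else 0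

/-- `σ(g) = sup{|g(x)| : x ∈ Ω_N, ‖x‖_σ ≤ 1}`. -/
def sigOf (N J : ℕ) (z : ℕ → ℕ → Bool) (s : ℕ → ℕ → ℝ) (w : ℕ → ℕ → ℝ) : ℝ :=
  sSup ((fun x => |applyW N J z w x|) '' {x | x ∈ OmegaSp N J z ∧ normSig N J z s x ≤ 1})

/-- `‖x‖_σ(A)`: the smallest `c ≥ 0` with `|g(x)| ≤ c σ(g)` for all `g ∈ A`. -/
def normOn (N J : ℕ) (z : ℕ → ℕ → Bool) (s : ℕ → ℕ → ℝ) (A : Set (ℕ → ℕ → ℝ))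
    (x : ℕ → ℕ → ℝ) : ℝ :=
  sInf {c : ℝ | 0 ≤ c ∧ ∀ w ∈ A, |applyW N J z w x| ≤ c * sigOf N J z s w}

/-- The matrix of Bernoulli variances `σ_{ij}² = varFn (θ_i − β_j)`. -/
def sigMat (θ β : ℕ → ℝ) : ℕ → ℕ → ℝ := fun i j => varFn (θ i - β j)

/-- Row sums `σ_{i+}² = Σ_j z_{ij} σ_{ij}²`. -/
def sRow (J : ℕ) (z : ℕ → ℕ → Bool) (s : ℕ → ℕ → ℝ) (i : ℕ) : ℝ :=
  ∑ j ∈ Finset.range J, if z i j = true then s i j else 0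

/-- Column sums `σ_{+j}² = Σ_i z_{ij} σ_{ij}²`. -/
def sCol (N : ℕ) (z : ℕ → ℕ → Bool) (s : ℕ → ℕ → ℝ) (j : ℕ) : ℝ :=
  ∑ i ∈ Finset.range N, if z i j = true then s i j else 0

/-- `σ_{++}² = Σ_{z_{ij}=1} σ_{ij}²`. -/
def sTot (N J : ℕ) (z : ℕ → ℕ → Bool) (s : ℕ → ℕ → ℝ) : ℝ :=
  ∑ i ∈ Finset.range N, sRow J z s i

/-- `w_{i+} = Σ_{j : z_{ij}=1} w_{ij}`. -/
def wRow (J : ℕ) (z : ℕ → ℕ → Bool) (w : ℕ → ℕ → ℝ) (i : ℕ) : ℝ :=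
  ∑ j ∈ Finset.range J, if z i j = true then w i j else 0

/-- `w_{+j} = Σ_{i : z_{ij}=1} w_{ij}`. -/
def wCol (N : ℕ) (z : ℕ → ℕ → Bool) (w : ℕ → ℕ → ℝ) (j : ℕ) : ℝ :=
  ∑ i ∈ Finset.range N, if z i j = true then w i j else 0

/-- `w_{++} = Σ_{z_{ij}=1} w_{ij}`. -/
def wTot (N J : ℕ) (z : ℕ → ℕ → Bool) (w : ℕ → ℕ → ℝ) : ℝ :=
  ∑ i ∈ Finset.range N, wRow J z w i

/-- `U = U_N(y, v)`: the element of `Ω_N` defined by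
`[x, U]_σ = Σ_{z_{ij}=1} x_{ij} (σ²(y_{ij}) − σ_{ij}²) v_{ij}` for all `x ∈ Ω_N`. -/
def IsU (N J : ℕ) (z : ℕ → ℕ → Bool) (s : ℕ → ℕ → ℝ) (y v U : ℕ → ℕ → ℝ) : Prop :=
  U ∈ OmegaSp N J z ∧ ∀ x ∈ OmegaSp N J z,
    ipSig N J z s x U = ∑ i ∈ Finset.range N, ∑ j ∈ Finset.range J,
      if z i j = true then x i j * (varFn (y i j) - s i j) * v i j else 0

/-- `R = R_N`: the element of `Ω_N` defined by
`[x, R]_σ = Σ_{z_{ij}=1} x_{ij} (Y_{ij} − E_{ij})` for all `x ∈ Ω_N`. -/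
def IsR (N J : ℕ) (z : ℕ → ℕ → Bool) (s : ℕ → ℕ → ℝ) (E Yo R : ℕ → ℕ → ℝ) : Prop :=
  R ∈ OmegaSp N J z ∧ ∀ x ∈ OmegaSp N J z,
    ipSig N J z s x R = ∑ i ∈ Finset.range N, ∑ j ∈ Finset.range J,
      if z i j = true then x i j * (Yo i j - E i j) else 0

/-- The coefficient array `w` represents the linear functional
`(θ_i − β_j : z_{ij} = 1) ↦ g(θ, β)` on `Ω_N`. -/
def RepFunc (N J : ℕ) (z : ℕ → ℕ → Bool) (w : ℕ → ℕ → ℝ)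
    (g : (ℕ → ℝ) → (ℕ → ℝ) → ℝ) : Prop :=
  ∀ θ β : ℕ → ℝ, (∑ i ∈ Finset.range N, θ i) = 0 →
    applyW N J z w (fun i j => θ i - β j) = g θ β

/-- Coefficients of the point-evaluation functional `f_{ij}(x) = x_{ij}`. -/
def pointW (i j : ℕ) : ℕ → ℕ → ℝ := fun i' j' => if i' = i ∧ j' = j then 1 else 0

/-- The set `A_p` of point-evaluation functionals at observed entries. -/
def Apoint (N J : ℕ) (z : ℕ → ℕ → Bool) : Set (ℕ → ℕ → ℝ) :=
  {w | ∃ i < N, ∃ j < J, z i j = true ∧ w = pointW i j}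

/-- The set `A_β` of (coefficient arrays of) the functionals `g_j(x) = β_j`, `j < J`. -/
def Abeta (N J : ℕ) (z : ℕ → ℕ → Bool) : Set (ℕ → ℕ → ℝ) :=
  {w | ∃ j < J, RepFunc N J z w fun _ β => β j}

/-- The set `A_θ` of (coefficient arrays of) the functionals `g_i(x) = θ_i`, `i < N`. -/
def Atheta (N J : ℕ) (z : ℕ → ℕ → Bool) : Set (ℕ → ℕ → ℝ) :=
  {w | ∃ i < N, RepFunc N J z w fun θ _ => θ i}

end

/-! Two solutions differ by `θ - θ'` on rows and `β - β'` on columns, and these agree on every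
observed entry. Walking along a connecting chain transports that equality to every pair `(i, j)`,
so both differences equal one constant; the normalisation `Σ θ_i = 0` forces it to vanish. -/

theorem ConnectedPair.eq_of_eq_on_observed {N J : ℕ} {z : ℕ → ℕ → Bool} {i j : ℕ}
    {α : Type*} {f g : ℕ → α} (hfg : ∀ i < N, ∀ j < J, z i j = true → f i = g j)
    (hi : i < N) (hj : j < J) (hc : ConnectedPair N J z i j) : f i = g j := by
  obtain ⟨k, hk, I, Jc, hbd, hfirst, hdiag, hnext, hlast⟩ := hc
  have hcol : ∀ l, 1 ≤ l → l ≤ k → g (Jc l) = f i := by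
    intro l hl
    induction l, hl using Nat.le_induction with
    | base => exact fun h1k => (hfg i hi _ (hbd 1 le_rfl h1k).2 hfirst).symm
    | succ l hl ih =>
      intro hlk
      have hlk' : l ≤ k := by omega
      calc g (Jc (l + 1)) = f (I l) :=
            (hfg _ (hbd l hl hlk').1 _ (hbd (l + 1) (by omega) hlk).2 (hnext l hl hlk)).symm
        _ = g (Jc l) := hfg _ (hbd l hl hlk').1 _ (hbd l hl hlk').2 (hdiag l hl hlk')
        _ = f i := ih hlk'
  obtain ⟨hIk, hJk⟩ := hbd k hk le_rfl
  calc f i = g (Jc k) := (hcol k hk le_rfl).symm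
    _ = f (I k) := (hfg _ hIk _ hJk (hdiag k hk le_rfl)).symm
    _ = g j := hfg _ hIk j hj hlast

theorem uniqueness_of_parameters_of_connected_general
    (N J : ℕ) (hN : 1 ≤ N) (hJ : 1 ≤ J) (z : ℕ → ℕ → Bool) (m : ℕ → ℕ → ℝ)
    (hconn : ∀ i < N, ∀ j < J, ConnectedPair N J z i j)
    (θ θ' β β' : ℕ → ℝ)
    (hθ : (∑ i ∈ Finset.range N, θ i) = 0)
    (hθ' : (∑ i ∈ Finset.range N, θ' i) = 0)
    (hsol : ∀ i < N, ∀ j < J, z i j = true → θ i - β j = m i j)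
    (hsol' : ∀ i < N, ∀ j < J, z i j = true → θ' i - β' j = m i j) :
    (∀ i < N, θ i = θ' i) ∧ (∀ j < J, β j = β' j) := by
  have hobs : ∀ i < N, ∀ j < J, z i j = true → θ i - θ' i = β j - β' j :=
    fun i hi j hj hz => by linarith [hsol i hi j hj hz, hsol' i hi j hj hz]
  have hall : ∀ i < N, ∀ j < J, θ i - θ' i = β j - β' j := fun i hi j hj =>
    (hconn i hi j hj).eq_of_eq_on_observed (f := fun i => θ i - θ' i) hobs hi hj
  have hshift : β 0 - β' 0 = 0 := by
    have hsum : ∑ i ∈ range N, (θ i - θ' i) = N * (β 0 - β' 0) := by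
      rw [sum_congr rfl fun i hi => hall i (mem_range.1 hi) 0 hJ, sum_const, card_range,
        nsmul_eq_mul]
    rw [sum_sub_distrib, hθ, hθ', sub_self] at hsum
    exact (mul_eq_zero.1 hsum.symm).resolve_left (Nat.cast_ne_zero.2 (by omega))
  exact ⟨fun i hi => by linarith [hall i hi 0 hJ],
    fun j hj => by linarith [hall 0 hN j hj, hall 0 hN 0 hJ]⟩

/-- **Proposition 1, part 1.** Under the connectedness condition, `θ` and `β` are uniquely
determined by `Σ_{i<N} θ_i = 0` and `θ_i − β_j = m_{ij}` for all observed `(i,j)`. -/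
theorem uniqueness_of_parameters_of_connected
    (N J : ℕ) (hN : 1 ≤ N) (hJ : 1 ≤ J) (z : ℕ → ℕ → Bool) (m : ℕ → ℕ → ℝ)
    (hconsist : ∃ θ₀ β₀ : ℕ → ℝ, ∀ i < N, ∀ j < J, z i j = true → m i j = θ₀ i - β₀ j)
    (hconn : ∀ i < N, ∀ j < J, ConnectedPair N J z i j)
    (θ θ' β β' : ℕ → ℝ)
    (hθ : (∑ i ∈ Finset.range N, θ i) = 0)
    (hθ' : (∑ i ∈ Finset.range N, θ' i) = 0)
    (hsol : ∀ i < N, ∀ j < J, z i j = true → θ i - β j = m i j)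
    (hsol' : ∀ i < N, ∀ j < J, z i j = true → θ' i - β' j = m i j) :
    (∀ i < N, θ i = θ' i) ∧ (∀ j < J, β j = β' j) :=
  uniqueness_of_parameters_of_connected_general N J hN hJ z m hconn θ θ' β β' hθ hθ' hsol hsol'
end

section
/- Suppose the connectedness condition fails: there exists a pair (i,j) for which no chain of indices i_1,…,i_k and j_1,…,j_k exists with z_{i,j_1} = z_{i_1,j_1} = z_{i_1,j_2} = z_{i_2,j_2} = … = z_{i_k,j_k} = z_{i_k,j} = 1. Then there exist two distinct pairs (θ̃, β̃) ≠ (θ, β), with θ, θ̃ ∈ ℝ^N and β, β̃ ∈ ℝ^J, such that Σ_{i=1}^N θ̃_i = 0, Σ_{i=1}^N θ_i = 0, and θ_i − β_j = θ̃_i − β̃_j for all (i,j) with z_{ij} = 1. -/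
/-!
If row `i₀` and column `j₀` are not connected, let `T` be the columns reachable from `i₀` by a
chain and `S` the rows observed in some column of `T`, together with `i₀`. Every observed entry
lies in `S × T` or in `Sᶜ × Tᶜ`, and `j₀ ∉ T`. Adding `1_S(i) - c` to `θ_i` and `1_T(j) - c` to
`β_j` therefore leaves every observed `θ_i - β_j` unchanged, `c = |S| / N` restores `Σ θ_i = 0`,
and the change is not zero since it is `1 - c` at `i₀` and `-c` at `j₀`.
-/

open Filter Finset MeasureTheory

namespace ConnectedPair

variable {N J : ℕ} {z : ℕ → ℕ → Bool}

theorem single {i j : ℕ} (hi : i < N) (hj : j < J) (hz : z i j = true) :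
    ConnectedPair N J z i j :=
  ⟨1, le_rfl, fun _ => i, fun _ => j, fun _ _ _ => ⟨hi, hj⟩, hz, fun _ _ _ => hz,
    fun _ _ _ => by omega, hz⟩

theorem extend {i₀ i j j' : ℕ} (h : ConnectedPair N J z i₀ j) (hi : i < N) (hj : j < J)
    (hij : z i j = true) (hij' : z i j' = true) : ConnectedPair N J z i₀ j' := by
  obtain ⟨k, hk, I, Jc, hlt, hfirst, hdiag, hoff, hlast⟩ := h
  refine ⟨k + 1, by omega, Function.update I (k + 1) i, Function.update Jc (k + 1) j,
    fun l hl hlk => ?_, ?_, fun l hl hlk => ?_, fun l hl hlk => ?_, by simpa using hij'⟩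
  · rcases eq_or_ne l (k + 1) with rfl | hne
    · simpa using ⟨hi, hj⟩
    · simpa [hne] using hlt l hl (by omega)
  · rwa [Function.update_of_ne (by omega)]
  · rcases eq_or_ne l (k + 1) with rfl | hne
    · simpa using hij
    · simpa [hne] using hdiag l hl (by omega)
  · rcases eq_or_ne l k with rfl | hne
    · simpa [show l ≠ l + 1 by omega] using hlast
    · rw [Function.update_of_ne (by omega), Function.update_of_ne (by omega)]
      exact hoff l hl (by omega)

end ConnectedPair

/-- `i₀` itself is included even when its row has no observed entry. -/
def connectedRows (N J : ℕ) (z : ℕ → ℕ → Bool) (i₀ : ℕ) : Set ℕ :=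
  {i | i = i₀ ∨ ∃ j < J, z i j = true ∧ ConnectedPair N J z i₀ j}

theorem mem_connectedRows_iff {N J : ℕ} {z : ℕ → ℕ → Bool} {i₀ i j : ℕ} (hi₀ : i₀ < N)
    (hi : i < N) (hj : j < J) (hz : z i j = true) :
    i ∈ connectedRows N J z i₀ ↔ ConnectedPair N J z i₀ j := by
  refine ⟨?_, fun h => Or.inr ⟨j, hj, hz, h⟩⟩
  rintro (rfl | ⟨j', hj', hz', h⟩)
  · exact ConnectedPair.single hi₀ hj hz
  · exact h.extend hi hj' hz' hz

theorem exists_ne_params_of_separated {N J : ℕ} {z : ℕ → ℕ → Bool} (θ β : ℕ → ℝ)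
    (hθ : (∑ i ∈ Finset.range N, θ i) = 0) (S T : Set ℕ)
    (hST : ∀ i < N, ∀ j < J, z i j = true → (i ∈ S ↔ j ∈ T))
    {i₀ j₀ : ℕ} (hi₀ : i₀ < N) (hj₀ : j₀ < J) (hi₀S : i₀ ∈ S) (hj₀T : j₀ ∉ T) :
    ∃ θ' β' : ℕ → ℝ,
      (∑ i ∈ Finset.range N, θ' i) = 0 ∧
      (∀ i < N, ∀ j < J, z i j = true → θ i - β j = θ' i - β' j) ∧
      ¬ ((∀ i < N, θ i = θ' i) ∧ (∀ j < J, β j = β' j)) := by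
  set c : ℝ := (∑ i ∈ Finset.range N, S.indicator 1 i) / N
  have hN : (N : ℝ) ≠ 0 := by exact_mod_cast (Nat.zero_lt_of_lt hi₀).ne'
  refine ⟨fun i => θ i + (S.indicator 1 i - c), fun j => β j + (T.indicator 1 j - c),
    ?_, fun i hi j hj hz => ?_, fun ⟨hθ', hβ'⟩ => ?_⟩
  · simp only [Finset.sum_add_distrib, Finset.sum_sub_distrib, hθ, Finset.sum_const,
      Finset.card_range, nsmul_eq_mul, c, mul_div_cancel₀ _ hN, sub_self, add_zero]
  · have hind : S.indicator (1 : ℕ → ℝ) i = T.indicator 1 j := by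
      by_cases hS : i ∈ S
      · simp [hS, (hST i hi j hj hz).mp hS]
      · simp [hS, mt (hST i hi j hj hz).mpr hS]
    simp only [hind]
    ring
  · have h₁ := hθ' i₀ hi₀
    have h₂ := hβ' j₀ hj₀
    simp only [Set.indicator_of_mem hi₀S, Set.indicator_of_notMem hj₀T, Pi.one_apply] at h₁ h₂
    linarith

theorem nonuniqueness_of_parameters_of_not_connected_general
    (N J : ℕ) (z : ℕ → ℕ → Bool)
    (θ β : ℕ → ℝ)
    (hθ : (∑ i ∈ Finset.range N, θ i) = 0)
    (hfail : ∃ i < N, ∃ j < J, ¬ ConnectedPair N J z i j) :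
    ∃ θ' β' : ℕ → ℝ,
      (∑ i ∈ Finset.range N, θ' i) = 0 ∧
      (∀ i < N, ∀ j < J, z i j = true → θ i - β j = θ' i - β' j) ∧
      ¬ ((∀ i < N, θ i = θ' i) ∧ (∀ j < J, β j = β' j)) := by
  obtain ⟨i₀, hi₀, j₀, hj₀, hnc⟩ := hfail
  exact exists_ne_params_of_separated θ β hθ (connectedRows N J z i₀)
    {j | ConnectedPair N J z i₀ j} (fun i hi j hj hz => mem_connectedRows_iff hi₀ hi hj hz)
    hi₀ hj₀ (Or.inl rfl) hnc

/-- **Proposition 1, part 2.** If the connectedness condition fails for some pair `(i,j)`,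
then the parameters are not identifiable: there is `(θ̃, β̃) ≠ (θ, β)` with `Σ_{i<N} θ̃_i = 0`
and `θ_i − β_j = θ̃_i − β̃_j` for all observed `(i,j)`. -/
theorem nonuniqueness_of_parameters_of_not_connected
    (N J : ℕ) (hN : 1 ≤ N) (hJ : 1 ≤ J) (z : ℕ → ℕ → Bool)
    (θ β : ℕ → ℝ)
    (hθ : (∑ i ∈ Finset.range N, θ i) = 0)
    (hfail : ∃ i < N, ∃ j < J, ¬ ConnectedPair N J z i j) :
    ∃ θ' β' : ℕ → ℝ,
      (∑ i ∈ Finset.range N, θ' i) = 0 ∧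
      (∀ i < N, ∀ j < J, z i j = true → θ i - β j = θ' i - β' j) ∧
      ¬ ((∀ i < N, θ i = θ' i) ∧ (∀ j < J, β j = β' j)) :=
  nonuniqueness_of_parameters_of_not_connected_general N J z θ β hθ hfail
end

section
/- Let A be a finite nonempty set of nonzero linear functionals on Ω_N with cardinality C_N. Suppose there exist sequences f_N > 0 and d_N ≥ 0 such that: (a) 0 < C_N < ∞ and f_N² / log C_N → ∞ as N → ∞; (b) if y, v ∈ Ω_N and ‖y − M*_N‖_σ(A) ≤ f_N, then there exists n < ∞ such that for all N > n, ‖U_N(y, v)‖_σ(A) ≤ d_N ‖y − M*_N‖_σ(A) ‖v‖_σ(A); (c) d_N f_N → 0 as N → ∞. Then P(‖R_N‖_σ(A) < f_N/2) → 1 as N → ∞. -/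
open Filter Finset MeasureTheory

/-!
Every functional `g = applyW w` has a representer `a ∈ Ω_N` for `[·,·]_σ`, so that
`σ(g) = ‖a‖_σ` and `g(R_N) = Σ a_{ij} (Y_{ij} - E_{ij})` is a weighted sum of independent centred
Bernoulli variables. The cumulant generating function `ψ` of this sum has `ψ(0) = ψ'(0) = 0` and
`ψ''(u) = Σ a_{ij}² σ²(m*_{ij} + u a_{ij}) = ‖a‖_σ² + [a, U_N(M*_N + u a, a)]_σ`, and condition (b)
bounds the last term by `d_N u ‖a‖_σ³`. For `u ≤ t = f_N / (4 σ(g))` this gives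
`ψ'' ≤ σ(g)² (1 + d_N f_N / 4)`, and the Chernoff bound at `t` yields
`P(|g(R_N)| > σ(g) f_N / 4) ≤ 2 exp(-f_N² / 64)` as soon as `d_N f_N ≤ 2`. If
`‖R_N‖_σ(A) ≥ f_N / 2`, some `g ∈ A` has `|g(R_N)| > σ(g) f_N / 4`, so the union bound over `A`
gives `P(‖R_N‖_σ(A) ≥ f_N / 2) ≤ 2 C_N exp(-f_N² / 64) → 0`, because `f_N² / log C_N → ∞`.
-/

open Topology

theorem exists_mem_forall_sum_mul_weight_eq {ι : Type*} [Fintype ι] {w : ι → ℝ}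
    (hw : ∀ i, 0 < w i) (W : Submodule ℝ (ι → ℝ)) (c : ι → ℝ) :
    ∃ a ∈ W, ∀ x ∈ W, ∑ i, x i * w i * a i = ∑ i, x i * c i := by
  classical
  set B := (Matrix.toBilin' (Matrix.diagonal w)).restrict W
  have hB_apply : ∀ x y : W, B x y = ∑ i, x.1 i * w i * y.1 i := fun x y => by
    simp [B, Matrix.toBilin'_apply', dotProduct, Matrix.mulVec_diagonal, mul_assoc]
  have hsep : ∀ x : W, B x x = 0 → x = 0 := fun x hx => by
    rw [hB_apply] at hx
    have hterm := (Finset.sum_eq_zero_iff_of_nonneg fun i _ =>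
      by nlinarith [hw i, sq_nonneg (x.1 i)]).mp hx
    ext i
    simpa [(hw i).ne', mul_comm, mul_assoc, mul_left_comm] using hterm i (Finset.mem_univ i)
  have hsymm : ∀ x y : W, B x y = B y x := fun x y => by
    simp only [hB_apply]; exact Finset.sum_congr rfl fun i _ => by ring
  have hnd : B.Nondegenerate :=
    ⟨fun x hx => hsep x (hx x), fun y hy => hsep y (by rw [← hy y])⟩
  set L : Module.Dual ℝ W := (dotProductBilin ℝ ℝ c).comp W.subtype
  refine ⟨((B.toDual hnd).symm L).1, ((B.toDual hnd).symm L).2, fun x hx => ?_⟩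
  have h := LinearMap.BilinForm.apply_toDual_symm_apply (hB := hnd) L ⟨x, hx⟩
  rw [hsymm, hB_apply] at h
  simpa [L, dotProduct, mul_comm] using h

section WeightedGeometry

variable {N J : ℕ} {z : ℕ → ℕ → Bool} {s : ℕ → ℕ → ℝ}

def obsPairs (N J : ℕ) (z : ℕ → ℕ → Bool) : Finset (ℕ × ℕ) :=
  (Finset.range N ×ˢ Finset.range J).filter fun p => z p.1 p.2 = true

theorem sum_ite_eq_sum_obsPairs (F : ℕ → ℕ → ℝ) :
    (∑ i ∈ Finset.range N, ∑ j ∈ Finset.range J, if z i j = true then F i j else 0)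
      = ∑ p ∈ obsPairs N J z, F p.1 p.2 := by
  rw [obsPairs, Finset.sum_filter, Finset.sum_product]

theorem ipSig_eq_sum_obsPairs (x y : ℕ → ℕ → ℝ) :
    ipSig N J z s x y = ∑ p ∈ obsPairs N J z, x p.1 p.2 * s p.1 p.2 * y p.1 p.2 :=
  sum_ite_eq_sum_obsPairs _

theorem applyW_eq_sum_obsPairs (w x : ℕ → ℕ → ℝ) :
    applyW N J z w x = ∑ p ∈ obsPairs N J z, w p.1 p.2 * x p.1 p.2 :=
  sum_ite_eq_sum_obsPairs _

def omegaSubmodule (N J : ℕ) (z : ℕ → ℕ → Bool) : Submodule ℝ (ℕ → ℕ → ℝ) where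
  carrier := OmegaSp N J z
  zero_mem' := ⟨0, 0, by simp, fun _ _ _ _ _ => by simp⟩
  add_mem' := by
    rintro x y ⟨θ, β, hθ, hx⟩ ⟨θ', β', hθ', hy⟩
    refine ⟨θ + θ', β + β', by simp [Finset.sum_add_distrib, hθ, hθ'], fun i hi j hj hz => ?_⟩
    simp only [Pi.add_apply, hx i hi j hj hz, hy i hi j hj hz]
    ring
  smul_mem' := by
    rintro t x ⟨θ, β, hθ, hx⟩
    refine ⟨t • θ, t • β, by simp [← Finset.mul_sum, hθ], fun i hi j hj hz => ?_⟩
    simp only [Pi.smul_apply, smul_eq_mul, hx i hi j hj hz]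
    ring

def sigForm (N J : ℕ) (z : ℕ → ℕ → Bool) (s : ℕ → ℕ → ℝ) :
    LinearMap.BilinForm ℝ (ℕ → ℕ → ℝ) :=
  LinearMap.mk₂ ℝ (ipSig N J z s)
    (fun x x' y => by
      simp only [ipSig_eq_sum_obsPairs, Pi.add_apply, ← Finset.sum_add_distrib]
      exact Finset.sum_congr rfl fun _ _ => by ring)
    (fun t x y => by
      simp only [ipSig_eq_sum_obsPairs, Pi.smul_apply, smul_eq_mul, Finset.mul_sum]
      exact Finset.sum_congr rfl fun _ _ => by ring)
    (fun x y y' => by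
      simp only [ipSig_eq_sum_obsPairs, Pi.add_apply, ← Finset.sum_add_distrib]
      exact Finset.sum_congr rfl fun _ _ => by ring)
    (fun t x y => by
      simp only [ipSig_eq_sum_obsPairs, Pi.smul_apply, smul_eq_mul, Finset.mul_sum]
      exact Finset.sum_congr rfl fun _ _ => by ring)

theorem sigForm_apply (x y : ℕ → ℕ → ℝ) : sigForm N J z s x y = ipSig N J z s x y := rfl

theorem ipSig_comm (x y : ℕ → ℕ → ℝ) : ipSig N J z s x y = ipSig N J z s y x := by
  simp only [ipSig_eq_sum_obsPairs]
  exact Finset.sum_congr rfl fun p _ => by ring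

theorem ipSig_self_nonneg (hs : ∀ i j, 0 < s i j) (x : ℕ → ℕ → ℝ) : 0 ≤ ipSig N J z s x x := by
  rw [ipSig_eq_sum_obsPairs]
  exact Finset.sum_nonneg fun p _ => by nlinarith [hs p.1 p.2, sq_nonneg (x p.1 p.2)]

theorem normSig_nonneg (x : ℕ → ℕ → ℝ) : 0 ≤ normSig N J z s x := Real.sqrt_nonneg _

theorem normSig_sq (hs : ∀ i j, 0 < s i j) (x : ℕ → ℕ → ℝ) :
    normSig N J z s x ^ 2 = ipSig N J z s x x :=
  Real.sq_sqrt (ipSig_self_nonneg hs x)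

theorem normSig_smul (t : ℝ) (x : ℕ → ℕ → ℝ) :
    normSig N J z s (t • x) = |t| * normSig N J z s x := by
  rw [normSig, normSig, ← sigForm_apply, ← sigForm_apply]
  simp only [map_smul, LinearMap.smul_apply, smul_eq_mul, ← mul_assoc, ← sq]
  rw [Real.sqrt_mul (sq_nonneg t), Real.sqrt_sq_eq_abs]

theorem abs_ipSig_le (hs : ∀ i j, 0 < s i j) (x y : ℕ → ℕ → ℝ) :
    |ipSig N J z s x y| ≤ normSig N J z s x * normSig N J z s y := by
  rw [← Real.sqrt_sq_eq_abs, normSig, normSig, ← Real.sqrt_mul (ipSig_self_nonneg hs x)]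
  refine Real.sqrt_le_sqrt ?_
  have h := (sigForm N J z s).apply_mul_apply_le_of_forall_zero_le (ipSig_self_nonneg hs) x y
  rwa [sigForm_apply, sigForm_apply, ipSig_comm y x, ← sq] at h

theorem exists_ipSig_representer (hs : ∀ i j, 0 < s i j) (c : ℕ → ℕ → ℝ) :
    ∃ a ∈ OmegaSp N J z, ∀ x ∈ OmegaSp N J z,
      ipSig N J z s x a = ∑ p ∈ obsPairs N J z, x p.1 p.2 * c p.1 p.2 := by
  let restrict : (ℕ → ℕ → ℝ) →ₗ[ℝ] (obsPairs N J z → ℝ) :=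
    { toFun x p := x p.1.1 p.1.2
      map_add' _ _ := rfl
      map_smul' _ _ := rfl }
  obtain ⟨_, ⟨a, ha, rfl⟩, hrep⟩ := exists_mem_forall_sum_mul_weight_eq (fun p => hs _ _)
    ((omegaSubmodule N J z).map restrict) (fun p => c p.1.1 p.1.2)
  refine ⟨a, ha, fun x hx => ?_⟩
  have h := hrep (restrict x) ⟨x, hx, rfl⟩
  simp only [restrict, LinearMap.coe_mk, AddHom.coe_mk] at h
  rw [ipSig_eq_sum_obsPairs, ← Finset.sum_coe_sort, h]
  exact Finset.sum_coe_sort _ (fun p : ℕ × ℕ => x p.1 p.2 * c p.1 p.2)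

end WeightedGeometry

section FunctionalNorms

variable {N J : ℕ} {z : ℕ → ℕ → Bool} {s : ℕ → ℕ → ℝ}

theorem exists_applyW_representer (hs : ∀ i j, 0 < s i j) (w : ℕ → ℕ → ℝ) :
    ∃ a ∈ OmegaSp N J z, ∀ x ∈ OmegaSp N J z, ipSig N J z s x a = applyW N J z w x := by
  obtain ⟨a, ha, hrep⟩ := exists_ipSig_representer (N := N) (J := J) (z := z) hs w
  refine ⟨a, ha, fun x hx => ?_⟩
  rw [hrep x hx, applyW_eq_sum_obsPairs]
  exact Finset.sum_congr rfl fun _ _ => mul_comm _ _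

theorem sigOf_eq_normSig (hs : ∀ i j, 0 < s i j) {w a : ℕ → ℕ → ℝ} (ha : a ∈ OmegaSp N J z)
    (hrep : ∀ x ∈ OmegaSp N J z, ipSig N J z s x a = applyW N J z w x) :
    sigOf N J z s w = normSig N J z s a := by
  set σa := normSig N J z s a
  have hσa : 0 ≤ σa := normSig_nonneg _
  refine IsGreatest.csSup_eq ⟨⟨σa⁻¹ • a, ⟨?_, ?_⟩, ?_⟩, ?_⟩
  · exact (omegaSubmodule N J z).smul_mem _ ha
  · rw [normSig_smul, abs_of_nonneg (inv_nonneg.2 hσa)]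
    exact inv_mul_le_one_of_le₀ le_rfl hσa
  · beta_reduce
    rw [← hrep _ ((omegaSubmodule N J z).smul_mem _ ha), ← sigForm_apply, map_smul,
      LinearMap.smul_apply, sigForm_apply, ← normSig_sq hs, smul_eq_mul, sq, ← mul_assoc,
      abs_of_nonneg (by positivity)]
    exact inv_mul_mul_self σa
  · rintro _ ⟨x, ⟨hx, hx1⟩, rfl⟩
    beta_reduce
    rw [← hrep x hx]
    exact (abs_ipSig_le hs x a).trans (mul_le_of_le_one_left hσa hx1)

theorem abs_applyW_le_normSig_mul_sigOf (hs : ∀ i j, 0 < s i j) (w : ℕ → ℕ → ℝ)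
    {x : ℕ → ℕ → ℝ} (hx : x ∈ OmegaSp N J z) :
    |applyW N J z w x| ≤ normSig N J z s x * sigOf N J z s w := by
  obtain ⟨a, ha, hrep⟩ := exists_applyW_representer (N := N) (J := J) (z := z) hs w
  rw [sigOf_eq_normSig hs ha hrep, ← hrep x hx]
  exact abs_ipSig_le hs x a

variable {A : Set (ℕ → ℕ → ℝ)} {x : ℕ → ℕ → ℝ}

theorem normOn_nonneg : 0 ≤ normOn N J z s A x :=
  Real.sInf_nonneg fun _ hc => hc.1

theorem normOn_le {c : ℝ} (hc : 0 ≤ c) (h : ∀ w ∈ A, |applyW N J z w x| ≤ c * sigOf N J z s w) :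
    normOn N J z s A x ≤ c :=
  csInf_le ⟨0, fun _ hb => hb.1⟩ ⟨hc, h⟩

theorem abs_applyW_le_normOn_mul_sigOf (hs : ∀ i j, 0 < s i j) (hx : x ∈ OmegaSp N J z)
    {w : ℕ → ℕ → ℝ} (hw : w ∈ A) :
    |applyW N J z w x| ≤ normOn N J z s A x * sigOf N J z s w := by
  have hclosed : IsClosed
      {c : ℝ | 0 ≤ c ∧ ∀ w ∈ A, |applyW N J z w x| ≤ c * sigOf N J z s w} := by
    simp only [Set.ofPred_and, Set.ofPred_forall]
    exact isClosed_Ici.inter <| isClosed_iInter fun w => isClosed_iInter fun _ =>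
      isClosed_le continuous_const (continuous_id.mul continuous_const)
  have hne : ∃ c, 0 ≤ c ∧ ∀ w ∈ A, |applyW N J z w x| ≤ c * sigOf N J z s w :=
    ⟨_, normSig_nonneg x, fun w _ => abs_applyW_le_normSig_mul_sigOf hs w hx⟩
  exact (hclosed.csInf_mem hne ⟨0, fun _ hc => hc.1⟩).2 w hw

theorem normOn_le_normSig (hs : ∀ i j, 0 < s i j) (hx : x ∈ OmegaSp N J z) :
    normOn N J z s A x ≤ normSig N J z s x :=
  normOn_le (normSig_nonneg _) fun w _ => abs_applyW_le_normSig_mul_sigOf hs w hx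

end FunctionalNorms

section Logistic

open Real

theorem logisticFn_pos (t : ℝ) : 0 < logisticFn t := by unfold logisticFn; positivity

theorem varFn_pos (t : ℝ) : 0 < varFn t := by unfold varFn; positivity

theorem hasDerivAt_log_one_add_exp (t : ℝ) :
    HasDerivAt (fun u => log (1 + exp u)) (logisticFn t) t :=
  ((hasDerivAt_exp t).const_add 1).log (by positivity)

theorem hasDerivAt_logisticFn (t : ℝ) : HasDerivAt logisticFn (varFn t) t := by
  have h := (hasDerivAt_exp t).div ((hasDerivAt_exp t).const_add 1) (by positivity)
  refine h.congr_deriv ?_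
  rw [varFn]
  field_simp
  ring

/-- The cumulant generating function `s ↦ log E exp(s (Y - p))` of a centred Bernoulli variable
with success probability `p = logisticFn m`. -/
noncomputable def logitCgf (m s : ℝ) : ℝ :=
  log (1 + exp (m + s)) - log (1 + exp m) - s * logisticFn m

theorem exp_logitCgf (m s : ℝ) :
    exp (logitCgf m s) = exp (-(s * logisticFn m)) * (1 + (exp s - 1) * logisticFn m) := by
  have h : 1 + (exp s - 1) * logisticFn m = (1 + exp (m + s)) / (1 + exp m) := by
    rw [logisticFn, exp_add]
    field_simp
    ring
  rw [logitCgf, sub_eq_add_neg, exp_add, exp_sub, exp_log (by positivity),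
    exp_log (by positivity), h, mul_comm]

theorem logitCgf_zero (m : ℝ) : logitCgf m 0 = 0 := by simp [logitCgf]

theorem hasDerivAt_logitCgf_mul (m q u : ℝ) :
    HasDerivAt (fun u => logitCgf m (u * q)) (q * (logisticFn (m + u * q) - logisticFn m)) u := by
  have h := ((hasDerivAt_log_one_add_exp (m + u * q)).comp u
    ((hasDerivAt_mul_const q).const_add m)).sub_const (log (1 + exp m))
  exact (h.sub ((hasDerivAt_mul_const q).mul_const (logisticFn m))).congr_deriv (by ring)

theorem hasDerivAt_mul_logisticFn_sub (m q u : ℝ) :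
    HasDerivAt (fun u => q * (logisticFn (m + u * q) - logisticFn m))
      (q ^ 2 * varFn (m + u * q)) u := by
  have h := (((hasDerivAt_logisticFn (m + u * q)).comp u
    ((hasDerivAt_mul_const q).const_add m)).sub_const (logisticFn m)).const_mul q
  exact h.congr_deriv (by ring)

end Logistic

theorem le_mul_sq_div_two_of_hasDerivAt {T B : ℝ} (hT : 0 ≤ T) {f f' f'' : ℝ → ℝ}
    (hf : ∀ u, HasDerivAt f (f' u) u) (hf' : ∀ u, HasDerivAt f' (f'' u) u)
    (hf0 : f 0 = 0) (hf'0 : f' 0 = 0) (hf'' : ∀ u ∈ Set.Icc 0 T, f'' u ≤ B) :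
    f T ≤ B * T ^ 2 / 2 := by
  have mono : ∀ {g g' : ℝ → ℝ} {t : ℝ}, 0 ≤ t → (∀ u, HasDerivAt g (g' u) u) →
      (∀ u ∈ Set.Icc 0 t, 0 ≤ g' u) → g 0 ≤ g t := fun {g g' t} ht hg hg' =>
    monotoneOn_of_hasDerivWithinAt_nonneg (convex_Icc 0 t)
      (continuous_iff_continuousAt.2 fun u => (hg u).continuousAt).continuousOn
      (fun u _ => (hg u).hasDerivWithinAt) (fun u hu => hg' u (interior_subset hu))
      ⟨le_rfl, ht⟩ ⟨ht, le_rfl⟩ ht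
  have hf'_le : ∀ u ∈ Set.Icc 0 T, f' u ≤ u * B := fun u hu => by
    have := mono (g := fun v => v * B - f' v) (g' := fun v => B - f'' v) hu.1
      (fun v => (hasDerivAt_mul_const B).fun_sub (hf' v))
      (fun v hv => sub_nonneg.2 (hf'' v ⟨hv.1, hv.2.trans hu.2⟩))
    linarith
  have := mono (g := fun v => B * v ^ 2 / 2 - f v) (g' := fun v => v * B - f' v) hT
    (fun v => ((((hasDerivAt_pow 2 v).const_mul B).div_const 2).fun_sub (hf v)).congr_deriv
      (by ring))
    (fun v hv => sub_nonneg.2 (hf'_le v hv))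
  linarith

section Chernoff

open ProbabilityTheory Real

variable {Ω : Type*} [MeasurableSpace Ω] {μ : Measure Ω} [IsProbabilityMeasure μ]

theorem mgf_mul_sub_logisticFn {Y : Ω → ℝ} (hY : Measurable Y) (hval : ∀ ω, Y ω = 0 ∨ Y ω = 1)
    {m : ℝ} (hprob : μ {ω | Y ω = 1} = ENNReal.ofReal (logisticFn m)) (q t : ℝ) :
    mgf (fun ω => q * (Y ω - logisticFn m)) μ t = exp (logitCgf m (t * q)) := by
  set S := {ω | Y ω = 1}
  have hS : MeasurableSet S := hY (measurableSet_singleton 1)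
  have hpt : (fun ω => exp (t * (q * (Y ω - logisticFn m))))
      = fun ω => exp (-(t * q * logisticFn m)) * (1 + (exp (t * q) - 1) * S.indicator 1 ω) := by
    ext ω
    rcases hval ω with h | h
    · simp [S, h, mul_assoc]
    · simp [S, h, ← exp_add]
      ring_nf
  rw [mgf, hpt, integral_const_mul, integral_add (integrable_const 1)
    ((integrable_const 1).indicator hS |>.const_mul _), integral_const_mul,
    integral_indicator_one hS, measureReal_def, hprob,
    ENNReal.toReal_ofReal (logisticFn_pos m).le, exp_logitCgf]
  simp

theorem mgf_sum_mul_sub_logisticFn {ι : Type*} {Y : ι → Ω → ℝ} (hY : ∀ i, Measurable (Y i))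
    (hind : iIndepFun Y μ) {P : Finset ι} (hval : ∀ i ∈ P, ∀ ω, Y i ω = 0 ∨ Y i ω = 1)
    {m : ι → ℝ} (hprob : ∀ i ∈ P, μ {ω | Y i ω = 1} = ENNReal.ofReal (logisticFn (m i)))
    (a : ι → ℝ) (t : ℝ) :
    mgf (fun ω => ∑ i ∈ P, a i * (Y i ω - logisticFn (m i))) μ t
      = exp (∑ i ∈ P, logitCgf (m i) (t * a i)) := by
  have hX := fun i => ((hY i).sub_const (logisticFn (m i))).const_mul (a i)
  have hindX : iIndepFun (fun i ω => a i * (Y i ω - logisticFn (m i))) μ :=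
    hind.comp (fun i y => a i * (y - logisticFn (m i)))
      fun i => (measurable_id.sub_const _).const_mul _
  have h := hindX.mgf_sum hX P (t := t)
  simp only [Finset.sum_fn] at h
  rw [h, exp_sum]
  exact Finset.prod_congr rfl fun i hi =>
    mgf_mul_sub_logisticFn (hY i) (hval i hi) (hprob i hi) (a i) t

theorem measure_le_sum_mul_sub_logisticFn_le {ι : Type*} {Y : ι → Ω → ℝ}
    (hY : ∀ i, Measurable (Y i)) (hind : iIndepFun Y μ) {P : Finset ι}
    (hval : ∀ i ∈ P, ∀ ω, Y i ω = 0 ∨ Y i ω = 1) {m : ι → ℝ}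
    (hprob : ∀ i ∈ P, μ {ω | Y i ω = 1} = ENNReal.ofReal (logisticFn (m i)))
    (a : ι → ℝ) {t B : ℝ} (ε : ℝ) (ht : 0 ≤ t)
    (hB : ∀ u ∈ Set.Icc 0 t, ∑ i ∈ P, a i ^ 2 * varFn (m i + u * a i) ≤ B) :
    μ {ω | ε ≤ ∑ i ∈ P, a i * (Y i ω - logisticFn (m i))}
      ≤ ENNReal.ofReal (exp (-t * ε + B * t ^ 2 / 2)) := by
  have hmgf := mgf_sum_mul_sub_logisticFn hY hind hval hprob a t
  have hint : Integrable
      (fun ω => exp (t * ∑ i ∈ P, a i * (Y i ω - logisticFn (m i)))) μ := by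
    by_contra h
    exact (exp_pos _).ne' (hmgf ▸ mgf_undef h)
  have hcgf : ∑ i ∈ P, logitCgf (m i) (t * a i) ≤ B * t ^ 2 / 2 :=
    le_mul_sq_div_two_of_hasDerivAt ht
      (fun u => HasDerivAt.fun_sum fun i _ => hasDerivAt_logitCgf_mul (m i) (a i) u)
      (fun u => HasDerivAt.fun_sum fun i _ => hasDerivAt_mul_logisticFn_sub (m i) (a i) u)
      (by simp [logitCgf_zero]) (by simp) hB
  rw [← ENNReal.ofReal_toReal (measure_ne_top μ _)]
  refine ENNReal.ofReal_le_ofReal ?_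
  calc (μ _).toReal
      ≤ exp (-t * ε) * mgf (fun ω => ∑ i ∈ P, a i * (Y i ω - logisticFn (m i))) μ t :=
        measure_ge_le_exp_mul_mgf ε ht hint
    _ ≤ exp (-t * ε) * exp (B * t ^ 2 / 2) := by
        rw [hmgf]
        gcongr
    _ = exp (-t * ε + B * t ^ 2 / 2) := (exp_add _ _).symm

end Chernoff

section ResidualTail

open ProbabilityTheory Real

variable {N J : ℕ} {z : ℕ → ℕ → Bool} {θ β : ℕ → ℝ} {A : Set (ℕ → ℕ → ℝ)} {f d : ℝ}

/-- Condition (b) of the theorem, for a single `N`. -/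
def ContractionBound (N J : ℕ) (z : ℕ → ℕ → Bool) (θ β : ℕ → ℝ) (A : Set (ℕ → ℕ → ℝ))
    (f d : ℝ) : Prop :=
  ∀ y ∈ OmegaSp N J z, ∀ v ∈ OmegaSp N J z,
    normOn N J z (sigMat θ β) A (fun i j => y i j - (θ i - β j)) ≤ f →
    ∀ U, IsU N J z (sigMat θ β) y v U →
      normOn N J z (sigMat θ β) A U
        ≤ d * normOn N J z (sigMat θ β) A (fun i j => y i j - (θ i - β j))
          * normOn N J z (sigMat θ β) A v

def BernModelAt {Ω : Type*} [MeasurableSpace Ω] (μ : Measure Ω) (N J : ℕ) (θ β : ℕ → ℝ)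
    (Y : ℕ → ℕ → Ω → ℝ) : Prop :=
  (∀ i j, Measurable (Y i j)) ∧ (∀ i j ω, Y i j ω = 0 ∨ Y i j ω = 1) ∧
  (∀ i < N, ∀ j < J, μ {ω | Y i j ω = 1} = ENNReal.ofReal (logisticFn (θ i - β j))) ∧
  iIndepFun (m := fun _ : ℕ × ℕ => Real.measurableSpace) (fun p : ℕ × ℕ => Y p.1 p.2) μ

theorem BernModel.bernModelAt {Ω : Type*} [MeasurableSpace Ω] {μ : Measure Ω} {Jn : ℕ → ℕ}
    {θs βs : ℕ → ℕ → ℝ} {Y : ℕ → ℕ → ℕ → Ω → ℝ} (h : BernModel μ Jn θs βs Y) (N : ℕ) :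
    BernModelAt μ N (Jn N) (θs N) (βs N) (Y N) :=
  ⟨h.1 N, h.2.1 N, h.2.2.1 N, h.2.2.2 N⟩

theorem ContractionBound.sum_sq_mul_varFn_le (hθ : ∑ i ∈ Finset.range N, θ i = 0)
    (hcontr : ContractionBound N J z θ β A f d) (hd : 0 ≤ d) {v : ℕ → ℕ → ℝ}
    (hv : v ∈ OmegaSp N J z)
    (hvA : ∀ x ∈ OmegaSp N J z, |ipSig N J z (sigMat θ β) x v|
      ≤ normOn N J z (sigMat θ β) A x * normSig N J z (sigMat θ β) v)
    {u : ℝ} (hu : 0 ≤ u) (huf : u * normSig N J z (sigMat θ β) v ≤ f) :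
    ∑ p ∈ obsPairs N J z, v p.1 p.2 ^ 2 * varFn (θ p.1 - β p.2 + u * v p.1 p.2)
      ≤ normSig N J z (sigMat θ β) v ^ 2 * (1 + d * (u * normSig N J z (sigMat θ β) v)) := by
  set s := sigMat θ β
  set σv := normSig N J z s v
  have hs : ∀ i j, 0 < s i j := fun _ _ => varFn_pos _
  have hm : (fun i j => θ i - β j) ∈ omegaSubmodule N J z := ⟨θ, β, hθ, fun _ _ _ _ _ => rfl⟩
  have huv : u • v ∈ omegaSubmodule N J z := (omegaSubmodule N J z).smul_mem u hv
  set y := (fun i j => θ i - β j) + u • v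
  have hy : y ∈ OmegaSp N J z := (omegaSubmodule N J z).add_mem hm huv
  have hyv : (fun i j => y i j - (θ i - β j)) = u • v := by
    ext i j
    simp [y]
  have hnorm_uv : normOn N J z s A (u • v) ≤ u * σv := by
    refine (normOn_le_normSig hs huv).trans_eq ?_
    rw [normSig_smul, abs_of_nonneg hu]
  obtain ⟨U, hU, hUrep⟩ :=
    exists_ipSig_representer (N := N) (J := J) (z := z) hs
      fun i j => (varFn (y i j) - s i j) * v i j
  have hIsU : IsU N J z s y v U := ⟨hU, fun x hx => by
    rw [hUrep x hx, sum_ite_eq_sum_obsPairs]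
    simp only [mul_assoc]⟩
  have hUA : normOn N J z s A U ≤ d * (u * σv) * σv := by
    have h := hcontr y hy v hv (hyv ▸ hnorm_uv.trans huf) U hIsU
    rw [hyv] at h
    exact h.trans (mul_le_mul (mul_le_mul_of_nonneg_left hnorm_uv hd) (normOn_le_normSig hs hv)
      normOn_nonneg (mul_nonneg hd (mul_nonneg hu (normSig_nonneg _))))
  have hexpand : ∑ p ∈ obsPairs N J z, v p.1 p.2 ^ 2 * varFn (θ p.1 - β p.2 + u * v p.1 p.2)
      = ipSig N J z s v v + ipSig N J z s U v := by
    rw [ipSig_comm U, hUrep v hv, ipSig_eq_sum_obsPairs, ← Finset.sum_add_distrib]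
    refine Finset.sum_congr rfl fun p _ => ?_
    simp only [y, s, sigMat, Pi.add_apply, Pi.smul_apply, smul_eq_mul]
    ring
  have hUv : ipSig N J z s U v ≤ d * (u * σv) * σv * σv :=
    (le_abs_self _).trans ((hvA U hU).trans (mul_le_mul_of_nonneg_right hUA (normSig_nonneg _)))
  rw [hexpand, ← normSig_sq hs]
  nlinarith [hUv]

variable {Ω : Type*} [MeasurableSpace Ω] {μ : Measure Ω} [IsProbabilityMeasure μ]
  {Y : ℕ → ℕ → Ω → ℝ}

theorem ContractionBound.measure_le_sum_mul_residual_le (hθ : ∑ i ∈ Finset.range N, θ i = 0)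
    (hcontr : ContractionBound N J z θ β A f d) (hf : 0 < f) (hd : 0 ≤ d) (hdf : d * f ≤ 2)
    (hY : BernModelAt μ N J θ β Y) {v : ℕ → ℕ → ℝ} (hv : v ∈ OmegaSp N J z)
    (hvA : ∀ x ∈ OmegaSp N J z, |ipSig N J z (sigMat θ β) x v|
      ≤ normOn N J z (sigMat θ β) A x * normSig N J z (sigMat θ β) v)
    (hσ : 0 < normSig N J z (sigMat θ β) v) :
    μ {ω | normSig N J z (sigMat θ β) v * f / 4
        ≤ ∑ p ∈ obsPairs N J z, v p.1 p.2 * (Y p.1 p.2 ω - logisticFn (θ p.1 - β p.2))}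
      ≤ ENNReal.ofReal (exp (-(f ^ 2 / 64))) := by
  obtain ⟨hmeas, hval, hprob, hind⟩ := hY
  set σv := normSig N J z (sigMat θ β) v
  -- `t = ε / σv²` for the threshold `ε = σv f / 4`: optimal up to the factor `1 + d f / 4`
  set t := f / (4 * σv)
  have ht : t * σv = f / 4 := by
    simp only [t]
    field_simp
  have hvar : ∀ u ∈ Set.Icc 0 t, ∑ p ∈ obsPairs N J z,
      v p.1 p.2 ^ 2 * varFn (θ p.1 - β p.2 + u * v p.1 p.2) ≤ σv ^ 2 * (1 + d * (f / 4)) := by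
    intro u hu
    have huσ : u * σv ≤ f / 4 := by
      calc u * σv ≤ t * σv := by gcongr; exact hu.2
        _ = f / 4 := ht
    refine (hcontr.sum_sq_mul_varFn_le hθ hd hv hvA hu.1 (by linarith)).trans ?_
    gcongr
  refine (measure_le_sum_mul_sub_logisticFn_le (fun p => hmeas p.1 p.2) hind
    (fun p _ ω => hval p.1 p.2 ω) (fun p hp => ?_) _ _ (by positivity) hvar).trans ?_
  · simp only [obsPairs, Finset.mem_filter, Finset.mem_product, Finset.mem_range] at hp
    exact hprob p.1 hp.1.1 p.2 hp.1.2
  · refine ENNReal.ofReal_le_ofReal (exp_le_exp.2 ?_)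
    have : -t * (σv * f / 4) + σv ^ 2 * (1 + d * (f / 4)) * t ^ 2 / 2
        = -(f ^ 2 / 16) + (1 + d * f / 4) * f ^ 2 / 32 := by
      rw [show -t * (σv * f / 4) = -(t * σv) * f / 4 by ring,
        show σv ^ 2 * (1 + d * (f / 4)) * t ^ 2 / 2 = (t * σv) ^ 2 * (1 + d * f / 4) / 2 by ring,
        ht]
      ring
    rw [this]
    nlinarith [sq_nonneg f]

theorem ContractionBound.measure_lt_abs_applyW_le (hθ : ∑ i ∈ Finset.range N, θ i = 0)
    (hcontr : ContractionBound N J z θ β A f d) (hf : 0 < f) (hd : 0 ≤ d) (hdf : d * f ≤ 2)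
    (hY : BernModelAt μ N J θ β Y) {R : Ω → ℕ → ℕ → ℝ}
    (hR : ∀ ω, IsR N J z (sigMat θ β) (fun i j => logisticFn (θ i - β j)) (fun i j => Y i j ω)
      (R ω))
    {w : ℕ → ℕ → ℝ} (hw : w ∈ A) :
    μ {ω | f / 4 * sigOf N J z (sigMat θ β) w < |applyW N J z w (R ω)|}
      ≤ 2 * ENNReal.ofReal (exp (-(f ^ 2 / 64))) := by
  have hs : ∀ i j, 0 < sigMat θ β i j := fun _ _ => varFn_pos _
  obtain ⟨a, ha, hrep⟩ := exists_applyW_representer (N := N) (J := J) (z := z) hs w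
  rw [sigOf_eq_normSig hs ha hrep]
  have hRS : ∀ ω, applyW N J z w (R ω)
      = ∑ p ∈ obsPairs N J z, a p.1 p.2 * (Y p.1 p.2 ω - logisticFn (θ p.1 - β p.2)) := by
    intro ω
    rw [← hrep _ (hR ω).1, ipSig_comm, (hR ω).2 a ha, sum_ite_eq_sum_obsPairs]
  rcases (normSig_nonneg a : 0 ≤ normSig N J z (sigMat θ β) a).eq_or_lt with hσ | hσ
  · -- a functional with `σ(g) = 0` vanishes on `Ω_N`, so the event is empty
    refine (measure_mono (t := ∅) fun ω hω => ?_).trans (by simp)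
    have h := abs_applyW_le_normSig_mul_sigOf hs w (hR ω).1
    rw [sigOf_eq_normSig hs ha hrep, ← hσ, mul_zero] at h
    rw [Set.mem_ofPred_eq, ← hσ, mul_zero] at hω
    linarith
  have haA : ∀ x ∈ OmegaSp N J z, |ipSig N J z (sigMat θ β) x a|
      ≤ normOn N J z (sigMat θ β) A x * normSig N J z (sigMat θ β) a := by
    intro x hx
    rw [hrep x hx, ← sigOf_eq_normSig hs ha hrep]
    exact abs_applyW_le_normOn_mul_sigOf hs hx hw
  have hneg : normSig N J z (sigMat θ β) (-a) = normSig N J z (sigMat θ β) a := by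
    rw [← neg_one_smul ℝ a, normSig_smul, abs_neg, abs_one, one_mul]
  have hupper := hcontr.measure_le_sum_mul_residual_le hθ hf hd hdf hY ha haA hσ
  have hlower := hcontr.measure_le_sum_mul_residual_le hθ hf hd hdf hY
    ((omegaSubmodule N J z).neg_mem ha)
    (fun x hx => by
      rw [hneg, ← sigForm_apply, map_neg, sigForm_apply, abs_neg]
      exact haA x hx)
    (hneg ▸ hσ)
  simp only [hneg, Pi.neg_apply, neg_mul, Finset.sum_neg_distrib] at hlower
  refine (measure_mono fun ω hω => ?_).trans ((measure_union_le _ _).trans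
    ((add_le_add hupper hlower).trans_eq (two_mul _).symm))
  simp only [Set.mem_ofPred_eq, hRS, Set.mem_union] at hω ⊢
  rcases le_abs'.1 hω.le with h | h
  · exact Or.inr (by linarith)
  · exact Or.inl (by linarith)

theorem ContractionBound.measure_normOn_lt_compl_le (hθ : ∑ i ∈ Finset.range N, θ i = 0)
    (hcontr : ContractionBound N J z θ β A f d) (hf : 0 < f) (hd : 0 ≤ d) (hdf : d * f ≤ 2)
    (hY : BernModelAt μ N J θ β Y) {R : Ω → ℕ → ℕ → ℝ}
    (hR : ∀ ω, IsR N J z (sigMat θ β) (fun i j => logisticFn (θ i - β j)) (fun i j => Y i j ω)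
      (R ω))
    (hA : A.Finite) :
    μ {ω | normOn N J z (sigMat θ β) A (R ω) < f / 2}ᶜ
      ≤ A.ncard * (2 * ENNReal.ofReal (exp (-(f ^ 2 / 64)))) := by
  have hcover : {ω | normOn N J z (sigMat θ β) A (R ω) < f / 2}ᶜ
      ⊆ ⋃ w ∈ hA.toFinset, {ω | f / 4 * sigOf N J z (sigMat θ β) w < |applyW N J z w (R ω)|} := by
    intro ω hω
    by_contra hnot
    simp only [Set.mem_iUnion, Set.mem_ofPred_eq, Set.Finite.mem_toFinset, not_exists,
      not_lt] at hnot
    exact hω ((normOn_le (by positivity) fun w hw => hnot w hw).trans_lt (by linarith))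
  refine (measure_mono hcover).trans ((measure_biUnion_finset_le _ _).trans ?_)
  rw [Set.ncard_eq_toFinset_card A hA, ← nsmul_eq_mul, ← Finset.sum_const]
  exact Finset.sum_le_sum fun w hw => hcontr.measure_lt_abs_applyW_le hθ hf hd hdf hY hR
    (hA.mem_toFinset.1 hw)

end ResidualTail

section Asymptotics

open Real

theorem eventually_one_lt_of_tendsto_sq_div_log {C : ℕ → ℕ} {f : ℕ → ℝ}
    (h : Tendsto (fun N => f N ^ 2 / log (C N)) atTop atTop) : ∀ᶠ N in atTop, 1 < C N := by
  filter_upwards [h.eventually_gt_atTop 0] with N hN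
  by_contra hC
  have hlog : log (C N) ≤ 0 := log_nonpos (Nat.cast_nonneg _) (by exact_mod_cast not_lt.1 hC)
  exact hN.not_ge (div_nonpos_of_nonneg_of_nonpos (sq_nonneg _) hlog)

theorem tendsto_mul_exp_neg_sq_div {C : ℕ → ℕ} {f : ℕ → ℝ}
    (h : Tendsto (fun N => f N ^ 2 / log (C N)) atTop atTop) {c : ℝ} (hc : 0 < c) :
    Tendsto (fun N => (C N : ℝ) * exp (-(f N ^ 2 / c))) atTop (𝓝 0) := by
  set r := fun N => f N ^ 2 / log (C N) / c
  have hr : Tendsto r atTop atTop := h.atTop_div_const hc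
  -- `C exp(-f² / c) = exp (log C * (1 - r))` and `log C ≥ log 2` once `C ≥ 2`
  have hbound : ∀ᶠ N in atTop,
      (C N : ℝ) * exp (-(f N ^ 2 / c)) ≤ exp (log 2 * (1 - r N)) := by
    filter_upwards [eventually_one_lt_of_tendsto_sq_div_log h, hr.eventually_ge_atTop 1]
      with N hC hrN
    have hC2 : (2 : ℝ) ≤ C N := by exact_mod_cast hC
    have hlog : 0 < log (C N) := log_pos (by linarith)
    have hexp : (C N : ℝ) * exp (-(f N ^ 2 / c)) = exp (log (C N) * (1 - r N)) := by
      rw [mul_sub, mul_one, exp_sub, exp_log (by linarith), div_eq_mul_inv, exp_neg]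
      simp only [r]
      field_simp
    rw [hexp]
    exact exp_le_exp.2 (mul_le_mul_of_nonpos_right (log_le_log two_pos hC2) (by linarith))
  have hlim : Tendsto (fun N => exp (log 2 * (1 - r N))) atTop (𝓝 0) :=
    tendsto_exp_atBot.comp
      ((tendsto_atBot_add_const_left atTop 1 (tendsto_neg_atTop_atBot.comp hr)).const_mul_atBot
        (log_pos one_lt_two))
  exact tendsto_of_tendsto_of_tendsto_of_le_of_le' tendsto_const_nhds hlim
    (Eventually.of_forall fun N => by positivity) hbound

end Asymptotics

theorem tendsto_measure_of_tendsto_measure_compl {Ω ι : Type*} [MeasurableSpace Ω]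
    {μ : Measure Ω} [IsProbabilityMeasure μ] {l : Filter ι} {s : ι → Set Ω}
    (h : Tendsto (fun i => μ (s i)ᶜ) l (𝓝 0)) : Tendsto (fun i => μ (s i)) l (𝓝 1) := by
  have hlower : Tendsto (fun i => 1 - μ (s i)ᶜ) l (𝓝 1) := by
    simpa using ENNReal.Tendsto.sub tendsto_const_nhds h (Or.inl ENNReal.one_ne_top)
  refine tendsto_of_tendsto_of_tendsto_of_le_of_le hlower tendsto_const_nhds (fun i => ?_)
    fun i => prob_le_one
  rw [tsub_le_iff_right, ← measure_univ (μ := μ), ← Set.union_compl_self (s i)]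
  exact measure_union_le _ _

theorem residual_norm_probability_bound_general
    {Ω' : Type*} [MeasurableSpace Ω'] (μ : Measure Ω') [IsProbabilityMeasure μ]
    (Jn : ℕ → ℕ) (z : ℕ → ℕ → ℕ → Bool) (θs βs : ℕ → ℕ → ℝ) (Y : ℕ → ℕ → ℕ → Ω' → ℝ)
    (hsum : ∀ N : ℕ, (∑ i ∈ Finset.range N, θs N i) = 0)
    (hmodel : BernModel μ Jn θs βs Y)
    (A : ℕ → Set (ℕ → ℕ → ℝ))
    (R : ℕ → Ω' → ℕ → ℕ → ℝ)
    (hR : ∀ N ω, IsR N (Jn N) (z N) (sigMat (θs N) (βs N))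
      (fun i j => logisticFn (θs N i - βs N j)) (fun i j => Y N i j ω) (R N ω))
    (f d : ℕ → ℝ) (hf : ∀ N, 0 < f N) (hd : ∀ N, 0 ≤ d N)
    (ha : Tendsto (fun N : ℕ => f N ^ 2 / Real.log ((A N).ncard)) atTop atTop)
    (hb : ∃ n : ℕ, ∀ N > n,
      ∀ y ∈ OmegaSp N (Jn N) (z N), ∀ v ∈ OmegaSp N (Jn N) (z N),
        normOn N (Jn N) (z N) (sigMat (θs N) (βs N)) (A N)
            (fun i j => y i j - (θs N i - βs N j)) ≤ f N →
        ∀ U, IsU N (Jn N) (z N) (sigMat (θs N) (βs N)) y v U →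
          normOn N (Jn N) (z N) (sigMat (θs N) (βs N)) (A N) U
            ≤ d N
              * normOn N (Jn N) (z N) (sigMat (θs N) (βs N)) (A N)
                  (fun i j => y i j - (θs N i - βs N j))
              * normOn N (Jn N) (z N) (sigMat (θs N) (βs N)) (A N) v)
    (hdf : Tendsto (fun N : ℕ => d N * f N) atTop (nhds 0)) :
    Tendsto
      (fun N : ℕ => μ {ω |
        normOn N (Jn N) (z N) (sigMat (θs N) (βs N)) (A N) (R N ω) < f N / 2})
      atTop (nhds 1) := by
  obtain ⟨n, hb⟩ := hb
  refine tendsto_measure_of_tendsto_measure_compl ?_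
  have hbound : ∀ᶠ N in atTop, μ {ω |
      normOn N (Jn N) (z N) (sigMat (θs N) (βs N)) (A N) (R N ω) < f N / 2}ᶜ
        ≤ ENNReal.ofReal (2 * ((A N).ncard * Real.exp (-(f N ^ 2 / 64)))) := by
    filter_upwards [eventually_gt_atTop n, hdf.eventually_le_const two_pos,
      eventually_one_lt_of_tendsto_sq_div_log ha] with N hN hdfN hC
    refine (ContractionBound.measure_normOn_lt_compl_le (hsum N) (hb N hN) (hf N) (hd N) hdfN
      (hmodel.bernModelAt N) (hR N) (Set.finite_of_ncard_pos (by omega))).trans_eq ?_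
    rw [ENNReal.ofReal_mul zero_le_two, ENNReal.ofReal_mul (Nat.cast_nonneg _),
      ENNReal.ofReal_natCast, ENNReal.ofReal_ofNat, mul_left_comm]
  have hlim := ENNReal.tendsto_ofReal
    ((tendsto_mul_exp_neg_sq_div ha (c := 64) (by norm_num)).const_mul 2)
  rw [mul_zero, ENNReal.ofReal_zero] at hlim
  exact tendsto_of_tendsto_of_tendsto_of_le_of_le' tendsto_const_nhds hlim
    (Eventually.of_forall fun _ => zero_le) hbound

/-- **Lemma 2.** Let `A` be a finite nonempty set of nonzero linear functionals on `Ω_N`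
with cardinality `C_N`. If `f_N > 0`, `d_N ≥ 0` satisfy (a) `f_N²/log C_N → ∞`, (b) the
contraction bound for `U_N(y,v)`, and (c) `d_N f_N → 0`, then
`P(‖R_N‖_σ(A) < f_N/2) → 1`. -/
theorem residual_norm_probability_bound
    {Ω' : Type*} [MeasurableSpace Ω'] (μ : Measure Ω') [IsProbabilityMeasure μ]
    (Jn : ℕ → ℕ) (z : ℕ → ℕ → ℕ → Bool) (θs βs : ℕ → ℕ → ℝ) (Y : ℕ → ℕ → ℕ → Ω' → ℝ)
    (hsum : ∀ N : ℕ, (∑ i ∈ Finset.range N, θs N i) = 0)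
    (hmodel : BernModel μ Jn θs βs Y)
    (A : ℕ → Set (ℕ → ℕ → ℝ))
    (hAfin : ∀ N, (A N).Finite) (hAne : ∀ N, (A N).Nonempty)
    (hAnz : ∀ N, ∀ w ∈ A N, ∃ x ∈ OmegaSp N (Jn N) (z N), applyW N (Jn N) (z N) w x ≠ 0)
    (R : ℕ → Ω' → ℕ → ℕ → ℝ)
    (hR : ∀ N ω, IsR N (Jn N) (z N) (sigMat (θs N) (βs N))
      (fun i j => logisticFn (θs N i - βs N j)) (fun i j => Y N i j ω) (R N ω))
    (f d : ℕ → ℝ) (hf : ∀ N, 0 < f N) (hd : ∀ N, 0 ≤ d N)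
    (ha : Tendsto (fun N : ℕ => f N ^ 2 / Real.log ((A N).ncard)) atTop atTop)
    (hb : ∃ n : ℕ, ∀ N > n,
      ∀ y ∈ OmegaSp N (Jn N) (z N), ∀ v ∈ OmegaSp N (Jn N) (z N),
        normOn N (Jn N) (z N) (sigMat (θs N) (βs N)) (A N)
            (fun i j => y i j - (θs N i - βs N j)) ≤ f N →
        ∀ U, IsU N (Jn N) (z N) (sigMat (θs N) (βs N)) y v U →
          normOn N (Jn N) (z N) (sigMat (θs N) (βs N)) (A N) U
            ≤ d N
              * normOn N (Jn N) (z N) (sigMat (θs N) (βs N)) (A N)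
                  (fun i j => y i j - (θs N i - βs N j))
              * normOn N (Jn N) (z N) (sigMat (θs N) (βs N)) (A N) v)
    (hdf : Tendsto (fun N : ℕ => d N * f N) atTop (nhds 0)) :
    Tendsto
      (fun N : ℕ => μ {ω |
        normOn N (Jn N) (z N) (sigMat (θs N) (βs N)) (A N) (R N ω) < f N / 2})
      atTop (nhds 1) :=
  residual_norm_probability_bound_general μ Jn z θs βs Y hsum hmodel A R hR f d hf hd ha hb hdf
end
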